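/- arXiv:2007.02011 — 5 statements merged into one kernel-verified Lean document; each statement's English description precedes it below -/
import Mathlib

section
/- Let n be an even positive integer and let S ⊆ [n]. Suppose that there is at most one unordered pair {i, n+1−i} (i ∈ [n]) with {i, n+1−i} ⊆ S, and at most one unordered pair {i, n+1−i} with {i, n+1−i} ∩ S = ∅. Then S and S* are weakly separated. -/
open Finset

/-- The K-involution on subsets of `[n] = {1,…,n}`:
`A* = {i ∈ [n] : n+1−i ∉ A}`. -/
def KInv (n : ℕ) (A : Finset ℕ) : Finset ℕ :=
  (Finset.Icc 1 n).filter (fun i => n + 1 - i ∉ A)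

/-- `A` surrounds `B` (requires `B − A ≠ ∅`):
`min(A−B) < min(B−A)` and `max(A−B) > max(B−A)`,
with the conventions `min ∅ = ⊤` and `max ∅ = ⊥`. -/
def Surrounds (A B : Finset ℕ) : Prop :=
  (B \ A).Nonempty ∧ (A \ B).min < (B \ A).min ∧ (B \ A).max < (A \ B).max

/-- `A` and `B` are chord separated: there are no `i<j<k<l` with `i,k` in one
of `A−B`, `B−A` and `j,l` in the other. -/
def ChordSep (A B : Finset ℕ) : Prop :=
  ¬ ∃ i j k l : ℕ, i < j ∧ j < k ∧ k < l ∧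
    ((i ∈ A \ B ∧ k ∈ A \ B ∧ j ∈ B \ A ∧ l ∈ B \ A) ∨
     (i ∈ B \ A ∧ k ∈ B \ A ∧ j ∈ A \ B ∧ l ∈ A \ B))

/-- `A` and `B` are strongly separated: there are no `i<j<k` with `i,k` in one
of `A−B`, `B−A` and `j` in the other. -/
def StrongSep (A B : Finset ℕ) : Prop :=
  ¬ ∃ i j k : ℕ, i < j ∧ j < k ∧
    ((i ∈ A \ B ∧ k ∈ A \ B ∧ j ∈ B \ A) ∨
     (i ∈ B \ A ∧ k ∈ B \ A ∧ j ∈ A \ B))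

/-- `A` and `B` are weakly separated: chord separated, `|A| ≤ |B|` whenever
`A` surrounds `B`, and `|B| ≤ |A|` whenever `B` surrounds `A`. -/
def WeakSep (A B : Finset ℕ) : Prop :=
  ChordSep A B ∧ (Surrounds A B → A.card ≤ B.card) ∧
    (Surrounds B A → B.card ≤ A.card)

/-!
Write `S*` for `KInv n S`. Then `S \ S*` consists of the `i ∈ S` with `n + 1 - i ∈ S`, and
`S* \ S` of the `i ∈ [n]` with `i, n + 1 - i ∉ S`, so by hypothesis each of the two differences
lies inside a single pair `{i, n + 1 - i}`. Two elements `i < k` of such a pair satisfy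
`i + k = n + 1`, which rules out an alternating pattern `i < j < k < l`: chord separation.
If one of `S`, `S*` surrounds the other, both differences are nonempty; being closed under
`i ↦ n + 1 - i`, which has no fixed point as `n` is even, each is then a full pair, so
`|S| = |S*|`.
-/

theorem chordSep_of_add_eq {A B : Finset ℕ} (c : ℕ)
    (hA : ∀ i ∈ A \ B, ∀ k ∈ A \ B, i < k → i + k = c)
    (hB : ∀ i ∈ B \ A, ∀ k ∈ B \ A, i < k → i + k = c) : ChordSep A B := by
  rintro ⟨i, j, k, l, hij, hjk, hkl, ⟨hi, hk, hj, hl⟩ | ⟨hi, hk, hj, hl⟩⟩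
  · have := hA i hi k hk (by omega)
    have := hB j hj l hl (by omega)
    omega
  · have := hB i hi k hk (by omega)
    have := hA j hj l hl (by omega)
    omega

theorem Surrounds.sdiff_nonempty {A B : Finset ℕ} (h : Surrounds A B) : (A \ B).Nonempty := by
  rw [nonempty_iff_ne_empty]
  intro hAB
  have hmin := h.2.1
  rw [hAB, min_empty] at hmin
  exact not_top_lt hmin

theorem weakSep_of_card_sdiff_eq {A B : Finset ℕ} (hc : ChordSep A B)
    (hcard : (A \ B).Nonempty → (B \ A).Nonempty → #(A \ B) = #(B \ A)) : WeakSep A B :=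
  ⟨hc, fun h => card_sdiff_le_card_sdiff_iff.mp (hcard h.sdiff_nonempty h.1).le,
    fun h => card_sdiff_le_card_sdiff_iff.mp (hcard h.1 h.sdiff_nonempty).ge⟩

def IsInReflPair (n : ℕ) (P : Finset ℕ) : Prop :=
  ∀ i ∈ P, ∀ j ∈ P, j = i ∨ j = n + 1 - i

namespace IsInReflPair

variable {n : ℕ} {P : Finset ℕ}

theorem add_eq (hP : IsInReflPair n P) (hPn : P ⊆ Icc 1 n) {i k : ℕ} (hi : i ∈ P) (hk : k ∈ P)
    (hik : i < k) : i + k = n + 1 := by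
  have := mem_Icc.mp (hPn hi)
  rcases hP i hi k hk with rfl | rfl <;> omega

theorem card_eq_two (hP : IsInReflPair n P) (hev : Even n) (hPn : P ⊆ Icc 1 n)
    (hrefl : ∀ i ∈ P, n + 1 - i ∈ P) (hne : P.Nonempty) : #P = 2 := by
  obtain ⟨a, ha⟩ := hne
  have := mem_Icc.mp (hPn ha)
  refine Finset.card_eq_two.mpr ⟨a, n + 1 - a, by obtain ⟨m, rfl⟩ := hev; omega, ?_⟩
  ext x
  simp only [mem_insert, mem_singleton]
  exact ⟨fun hx => hP a ha x hx, by rintro (rfl | rfl) <;> simp [ha, hrefl]⟩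

end IsInReflPair

section KInv

variable {n : ℕ} {S : Finset ℕ}

theorem mem_sdiff_kInv (hS : S ⊆ Icc 1 n) {i : ℕ} :
    i ∈ S \ KInv n S ↔ i ∈ S ∧ n + 1 - i ∈ S := by
  simp only [KInv, mem_sdiff, mem_filter, not_and, not_not]
  exact ⟨fun h => ⟨h.1, h.2 (hS h.1)⟩, fun h => ⟨h.1, fun _ => h.2⟩⟩

theorem mem_kInv_sdiff {i : ℕ} : i ∈ KInv n S \ S ↔ i ∈ Icc 1 n ∧ i ∉ S ∧ n + 1 - i ∉ S := by
  simp only [KInv, mem_sdiff, mem_filter]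
  tauto

theorem sdiff_kInv_subset (hS : S ⊆ Icc 1 n) : S \ KInv n S ⊆ Icc 1 n :=
  sdiff_subset.trans hS

theorem kInv_sdiff_subset : KInv n S \ S ⊆ Icc 1 n :=
  sdiff_subset.trans (filter_subset _ _)

theorem reflect_mem_sdiff_kInv (hS : S ⊆ Icc 1 n) {i : ℕ} (hi : i ∈ S \ KInv n S) :
    n + 1 - i ∈ S \ KInv n S := by
  have := mem_Icc.mp (sdiff_kInv_subset hS hi)
  rw [mem_sdiff_kInv hS] at hi ⊢
  rw [show n + 1 - (n + 1 - i) = i by omega]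
  exact hi.symm

theorem reflect_mem_kInv_sdiff {i : ℕ} (hi : i ∈ KInv n S \ S) : n + 1 - i ∈ KInv n S \ S := by
  have := mem_Icc.mp (kInv_sdiff_subset hi)
  rw [mem_kInv_sdiff] at hi ⊢
  rw [show n + 1 - (n + 1 - i) = i by omega, mem_Icc]
  exact ⟨by omega, hi.2.2, hi.2.1⟩

end KInv

theorem weakSep_self_of_few_pairs_general
    (n : ℕ) (hev : Even n)
    (S : Finset ℕ) (hS : S ⊆ Finset.Icc 1 n)
    (hfull : ∀ i ∈ Finset.Icc 1 n, ∀ j ∈ Finset.Icc 1 n,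
      i ∈ S → n + 1 - i ∈ S → j ∈ S → n + 1 - j ∈ S → (j = i ∨ j = n + 1 - i))
    (hpoor : ∀ i ∈ Finset.Icc 1 n, ∀ j ∈ Finset.Icc 1 n,
      i ∉ S → n + 1 - i ∉ S → j ∉ S → n + 1 - j ∉ S → (j = i ∨ j = n + 1 - i)) :
    WeakSep S (KInv n S) := by
  have hX : IsInReflPair n (S \ KInv n S) := fun i hi j hj => by
    rw [mem_sdiff_kInv hS] at hi hj
    exact hfull i (hS hi.1) j (hS hj.1) hi.1 hi.2 hj.1 hj.2
  have hY : IsInReflPair n (KInv n S \ S) := fun i hi j hj => by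
    rw [mem_kInv_sdiff] at hi hj
    exact hpoor i hi.1 j hj.1 hi.2.1 hi.2.2 hj.2.1 hj.2.2
  have hXn := sdiff_kInv_subset hS
  have hYn : KInv n S \ S ⊆ Icc 1 n := kInv_sdiff_subset
  refine weakSep_of_card_sdiff_eq
    (chordSep_of_add_eq (n + 1) (fun _ hi _ hk => hX.add_eq hXn hi hk)
      (fun _ hi _ hk => hY.add_eq hYn hi hk)) fun hXne hYne => ?_
  rw [hX.card_eq_two hev hXn (fun _ => reflect_mem_sdiff_kInv hS) hXne,
    hY.card_eq_two hev hYn (fun _ => reflect_mem_kInv_sdiff) hYne]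

/-- For even `n`, if `S ⊆ [n]` has at most one full symmetric pair
`{i, n+1−i} ⊆ S` and at most one poor symmetric pair `{i, n+1−i} ∩ S = ∅`,
then `S` and `S*` are weakly separated. -/
theorem weakSep_self_of_few_pairs
    (n : ℕ) (hn : 0 < n) (hev : Even n)
    (S : Finset ℕ) (hS : S ⊆ Finset.Icc 1 n)
    (hfull : ∀ i ∈ Finset.Icc 1 n, ∀ j ∈ Finset.Icc 1 n,
      i ∈ S → n + 1 - i ∈ S → j ∈ S → n + 1 - j ∈ S → (j = i ∨ j = n + 1 - i))
    (hpoor : ∀ i ∈ Finset.Icc 1 n, ∀ j ∈ Finset.Icc 1 n,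
      i ∉ S → n + 1 - i ∉ S → j ∉ S → n + 1 - j ∉ S → (j = i ∨ j = n + 1 - i)) :
    WeakSep S (KInv n S) :=
  weakSep_self_of_few_pairs_general n hev S hS hfull hpoor
end

section
/- Let n be a positive integer and let S, T ⊆ [n] be weakly separated. Then S* and T* are weakly separated. -/
open Finset

/-!
Write `r i = n + 1 - i`, an order-reversing involution of `[n]`. For `S, T ⊆ [n]` one has
`S* − T* = r (T − S)` and `T* − S* = r (S − T)`. Chord separation and surrounding depend only on
the relative order of the elements of the two differences, so reversing the order and swapping
the differences preserves chord separation and turns "`S*` surrounds `T*`" into "`T` surrounds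
`S`". Since `|A*| = n − |A|`, the cardinality condition is reversed accordingly.
-/

section MinMax

variable {α : Type*} [LinearOrder α] {X Y : Finset α}

lemma Finset.min_lt_min_iff (hY : Y.Nonempty) :
    X.min < Y.min ↔ ∃ x ∈ X, ∀ y ∈ Y, x < y := by
  constructor
  · intro h
    have hX : X.Nonempty := by
      by_contra hX
      rw [not_nonempty_iff_eq_empty.mp hX, min_empty] at h
      exact not_top_lt h
    refine ⟨X.min' hX, X.min'_mem hX, fun y hy => ?_⟩
    rw [← coe_min' hX, ← coe_min' hY] at h
    exact (WithTop.coe_lt_coe.mp h).trans_le (Y.min'_le y hy)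
  · rintro ⟨x, hx, hlt⟩
    refine (min_le hx).trans_lt ?_
    rw [← coe_min' hY]
    exact WithTop.coe_lt_coe.mpr (hlt _ (Y.min'_mem hY))

lemma Finset.max_lt_max_iff (hX : X.Nonempty) :
    X.max < Y.max ↔ ∃ y ∈ Y, ∀ x ∈ X, x < y := by
  constructor
  · intro h
    have hY : Y.Nonempty := by
      by_contra hY
      rw [not_nonempty_iff_eq_empty.mp hY, max_empty] at h
      exact not_lt_bot h
    refine ⟨Y.max' hY, Y.max'_mem hY, fun x hx => ?_⟩
    rw [← coe_max' hX, ← coe_max' hY] at h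
    exact (X.le_max' x hx).trans_lt (WithBot.coe_lt_coe.mp h)
  · rintro ⟨y, hy, hlt⟩
    refine lt_of_lt_of_le ?_ (le_max hy)
    rw [← coe_max' hX]
    exact WithBot.coe_lt_coe.mpr (hlt _ (X.max'_mem hX))

end MinMax

lemma surrounds_iff {A B : Finset ℕ} :
    Surrounds A B ↔ (B \ A).Nonempty ∧
      ∃ a₁ ∈ A \ B, ∃ a₂ ∈ A \ B, ∀ b ∈ B \ A, a₁ < b ∧ b < a₂ := by
  unfold Surrounds
  constructor
  · rintro ⟨hne, hmin, hmax⟩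
    obtain ⟨a₁, ha₁, h₁⟩ := (min_lt_min_iff hne).mp hmin
    obtain ⟨a₂, ha₂, h₂⟩ := (max_lt_max_iff hne).mp hmax
    exact ⟨hne, a₁, ha₁, a₂, ha₂, fun b hb => ⟨h₁ b hb, h₂ b hb⟩⟩
  · rintro ⟨hne, a₁, ha₁, a₂, ha₂, h⟩
    exact ⟨hne, (min_lt_min_iff hne).mpr ⟨a₁, ha₁, fun b hb => (h b hb).1⟩,
      (max_lt_max_iff hne).mpr ⟨a₂, ha₂, fun b hb => (h b hb).2⟩⟩

section OrderReversal

variable {f : ℕ → ℕ} {s : Set ℕ} {A B A' B' : Finset ℕ}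

lemma ChordSep.of_sdiff_eq_image (hf : StrictAntiOn f s) (hA : (A : Set ℕ) ⊆ s)
    (hB : (B : Set ℕ) ⊆ s) (h₁ : A' \ B' = (B \ A).image f) (h₂ : B' \ A' = (A \ B).image f)
    (h : ChordSep A B) : ChordSep A' B' := by
  have hAB : ∀ a ∈ A \ B, a ∈ s := fun a ha => hA (mem_sdiff.1 ha).1
  have hBA : ∀ b ∈ B \ A, b ∈ s := fun b hb => hB (mem_sdiff.1 hb).1
  rintro ⟨_, _, _, _, hij, hjk, hkl, hcase⟩
  rw [h₁, h₂] at hcase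
  simp only [mem_image] at hcase
  rcases hcase with ⟨⟨i, hi, rfl⟩, ⟨k, hk, rfl⟩, ⟨j, hj, rfl⟩, ⟨l, hl, rfl⟩⟩ |
      ⟨⟨i, hi, rfl⟩, ⟨k, hk, rfl⟩, ⟨j, hj, rfl⟩, ⟨l, hl, rfl⟩⟩
  · exact h ⟨l, k, j, i, (hf.lt_iff_gt (hBA k hk) (hAB l hl)).1 hkl,
      (hf.lt_iff_gt (hAB j hj) (hBA k hk)).1 hjk, (hf.lt_iff_gt (hBA i hi) (hAB j hj)).1 hij,
      Or.inl ⟨hl, hj, hk, hi⟩⟩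
  · exact h ⟨l, k, j, i, (hf.lt_iff_gt (hAB k hk) (hBA l hl)).1 hkl,
      (hf.lt_iff_gt (hBA j hj) (hAB k hk)).1 hjk, (hf.lt_iff_gt (hAB i hi) (hBA j hj)).1 hij,
      Or.inr ⟨hl, hj, hk, hi⟩⟩

lemma Surrounds.of_sdiff_eq_image (hf : StrictAntiOn f s) (hA : (A : Set ℕ) ⊆ s)
    (hB : (B : Set ℕ) ⊆ s) (h₁ : A' \ B' = (B \ A).image f) (h₂ : B' \ A' = (A \ B).image f)
    (h : Surrounds A' B') : Surrounds B A := by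
  rw [surrounds_iff, h₁, h₂] at h
  obtain ⟨hne, x₁, hx₁, x₂, hx₂, hbetween⟩ := h
  obtain ⟨b₁, hb₁, rfl⟩ := mem_image.1 hx₁
  obtain ⟨b₂, hb₂, rfl⟩ := mem_image.1 hx₂
  refine surrounds_iff.2 ⟨image_nonempty.1 hne, b₂, hb₂, b₁, hb₁, fun a ha => ?_⟩
  have hb : ∀ b ∈ B \ A, b ∈ s := fun b hb => hB (mem_sdiff.1 hb).1
  have has : a ∈ s := hA (mem_sdiff.1 ha).1
  obtain ⟨hlo, hhi⟩ := hbetween (f a) (mem_image_of_mem f ha)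
  exact ⟨(hf.lt_iff_gt has (hb b₂ hb₂)).1 hhi, (hf.lt_iff_gt (hb b₁ hb₁) has).1 hlo⟩

end OrderReversal

section KInv

variable {n : ℕ} {S T : Finset ℕ}

lemma strictAntiOn_add_one_sub (n : ℕ) : StrictAntiOn (n + 1 - ·) (Set.Icc 1 n) := by
  intro a ha b hb hab
  simp only [Set.mem_Icc] at ha hb
  dsimp only
  omega

lemma kInv_sdiff_kInv (hT : T ⊆ Icc 1 n) :
    KInv n S \ KInv n T = (T \ S).image (n + 1 - ·) := by
  ext i
  simp only [KInv, mem_sdiff, mem_filter, mem_Icc, mem_image, not_and, not_not]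
  constructor
  · rintro ⟨⟨hi, hiS⟩, hiT⟩
    exact ⟨n + 1 - i, ⟨hiT hi, hiS⟩, by omega⟩
  · rintro ⟨t, ⟨htT, htS⟩, rfl⟩
    have ht := mem_Icc.1 (hT htT)
    rw [show n + 1 - (n + 1 - t) = t by omega]
    exact ⟨⟨⟨by omega, by omega⟩, htS⟩, fun _ => htT⟩

lemma kInv_eq_sdiff_image : KInv n S = Icc 1 n \ S.image (n + 1 - ·) := by
  ext i
  simp only [KInv, mem_sdiff, mem_filter, mem_Icc, mem_image, and_congr_right_iff]
  intro hi
  constructor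
  · rintro hiS ⟨s, hs, rfl⟩
    exact hiS (by rwa [show n + 1 - (n + 1 - s) = s by omega])
  · exact fun h hiS => h ⟨n + 1 - i, hiS, by omega⟩

lemma card_kInv (hS : S ⊆ Icc 1 n) : #(KInv n S) = n - #S := by
  have hinj : Set.InjOn (n + 1 - ·) (S : Set ℕ) :=
    (strictAntiOn_add_one_sub n).injOn.mono (by simpa using coe_subset.2 hS)
  have hsub : S.image (n + 1 - ·) ⊆ Icc 1 n := by
    intro i hi
    obtain ⟨s, hs, rfl⟩ := mem_image.1 hi
    have := mem_Icc.1 (hS hs)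
    exact mem_Icc.2 ⟨by omega, by omega⟩
  rw [kInv_eq_sdiff_image, card_sdiff_of_subset hsub, card_image_of_injOn hinj, Nat.card_Icc,
    Nat.add_sub_cancel]

end KInv

theorem weakSep_kInv_general
    (n : ℕ)
    (S T : Finset ℕ) (hS : S ⊆ Finset.Icc 1 n) (hT : T ⊆ Finset.Icc 1 n)
    (hws : WeakSep S T) :
    WeakSep (KInv n S) (KInv n T) := by
  obtain ⟨hchord, hST, hTS⟩ := hws
  have hS' : (S : Set ℕ) ⊆ Set.Icc 1 n := by simpa using coe_subset.2 hS
  have hT' : (T : Set ℕ) ⊆ Set.Icc 1 n := by simpa using coe_subset.2 hT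
  have hr := strictAntiOn_add_one_sub n
  have h₁ := kInv_sdiff_kInv (S := S) hT
  have h₂ := kInv_sdiff_kInv (S := T) hS
  refine ⟨hchord.of_sdiff_eq_image hr hS' hT' h₁ h₂, fun h => ?_, fun h => ?_⟩
  · rw [card_kInv hS, card_kInv hT]
    exact Nat.sub_le_sub_left (hTS (h.of_sdiff_eq_image hr hS' hT' h₁ h₂)) n
  · rw [card_kInv hS, card_kInv hT]
    exact Nat.sub_le_sub_left (hST (h.of_sdiff_eq_image hr hT' hS' h₂ h₁)) n

/-- If `S, T ⊆ [n]` are weakly separated, then so are `S*` and `T*`. -/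
theorem weakSep_kInv
    (n : ℕ) (hn : 0 < n)
    (S T : Finset ℕ) (hS : S ⊆ Finset.Icc 1 n) (hT : T ⊆ Finset.Icc 1 n)
    (hws : WeakSep S T) :
    WeakSep (KInv n S) (KInv n T) :=
  weakSep_kInv_general n S T hS hT hws
end

section
/- Let n be a positive integer, let A, B ⊆ [n], and let z ∈ [n] with z ∉ A and z ∉ B. If A and B ∪ {z} are weakly separated and |A| ≤ |B|, then A and B are weakly separated. -/
open Finset

section

variable {A B A' B' : Finset ℕ}

theorem ChordSep.of_sdiff_subset (h : ChordSep A' B') (hAB : A \ B ⊆ A' \ B')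
    (hBA : B \ A ⊆ B' \ A') : ChordSep A B := by
  rintro ⟨i, j, k, l, hij, hjk, hkl, ⟨hi, hk, hj, hl⟩ | ⟨hi, hk, hj, hl⟩⟩
  · exact h ⟨i, j, k, l, hij, hjk, hkl, Or.inl ⟨hAB hi, hAB hk, hBA hj, hBA hl⟩⟩
  · exact h ⟨i, j, k, l, hij, hjk, hkl, Or.inr ⟨hBA hi, hBA hk, hAB hj, hAB hl⟩⟩

theorem Surrounds.of_sdiff (h : Surrounds B A) (hAB : A' \ B' = A \ B)
    (hBA : B \ A ⊆ B' \ A') : Surrounds B' A' := by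
  obtain ⟨hne, hmin, hmax⟩ := h
  rw [Surrounds, hAB]
  exact ⟨hne, (min_mono hBA).trans_lt hmin, hmax.trans_le (max_mono hBA)⟩

end

theorem weakSep_of_weakSep_insert_general
    (A B : Finset ℕ)
    (z : ℕ) (hzA : z ∉ A)
    (hws : WeakSep A (insert z B)) (hcard : A.card ≤ B.card) :
    WeakSep A B := by
  obtain ⟨hchord, -, hsurr⟩ := hws
  have hAB : A \ insert z B = A \ B := sdiff_insert_of_notMem hzA B
  have hBA : B \ A ⊆ insert z B \ A := sdiff_subset_sdiff (subset_insert z B) subset_rfl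
  refine ⟨hchord.of_sdiff_subset hAB.ge hBA, fun _ => hcard, fun hsurrBA => ?_⟩
  exact (card_le_card (subset_insert z B)).trans (hsurr (hsurrBA.of_sdiff hAB hBA))

/-- If `z ∉ A`, `z ∉ B`, `A` and `B ∪ {z}` are weakly separated, and
`|A| ≤ |B|`, then `A` and `B` are weakly separated. -/
theorem weakSep_of_weakSep_insert
    (n : ℕ) (hn : 0 < n)
    (A B : Finset ℕ) (hA : A ⊆ Finset.Icc 1 n) (hB : B ⊆ Finset.Icc 1 n)
    (z : ℕ) (hz : z ∈ Finset.Icc 1 n) (hzA : z ∉ A) (hzB : z ∉ B)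
    (hws : WeakSep A (insert z B)) (hcard : A.card ≤ B.card) :
    WeakSep A B :=
  weakSep_of_weakSep_insert_general A B z hzA hws hcard
end

section
/- Let n be a positive integer, let C ⊆ 2^[n] be an inclusion-wise maximal symmetric chord separated collection, and let A ⊆ [n] be chord separated from every member of C and chord separated from A*. Then A ∈ C and A* ∈ C. -/
open Finset

/-- A symmetric chord separated collection in `2^[n]`. -/
def SymmCColl (n : ℕ) (S : Finset (Finset ℕ)) : Prop :=
  (∀ A ∈ S, A ⊆ Finset.Icc 1 n) ∧ (∀ A ∈ S, KInv n A ∈ S) ∧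
    ∀ A ∈ S, ∀ B ∈ S, ChordSep A B

/-
Adding `A` and `A*` to `C` keeps the collection symmetric and chord separated, so by maximality
nothing was added. The only nontrivial pair is `A*, B` with `B ∈ C`: the reflection
`m ↦ n + 1 - m` reverses the order of `[n]` and maps `X* \ Y*` onto `Y \ X`, so `*` preserves
chord separation, and `A` chord separated from `B* ∈ C` gives `A*` chord separated from `B`.
-/

theorem chordSep_refl (A : Finset ℕ) : ChordSep A A := by
  simp [ChordSep]

theorem ChordSep.symm {A B : Finset ℕ} (h : ChordSep A B) : ChordSep B A :=
  fun ⟨i, j, k, l, hij, hjk, hkl, hor⟩ => h ⟨i, j, k, l, hij, hjk, hkl, hor.symm⟩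

section KInv

variable {n : ℕ} {A B : Finset ℕ}

theorem kInv_subset_Icc : KInv n A ⊆ Icc 1 n :=
  filter_subset _ _

theorem kInv_kInv (hA : A ⊆ Icc 1 n) : KInv n (KInv n A) = A := by
  ext i
  have hiA := @hA i
  simp only [KInv, mem_filter, mem_Icc] at hiA ⊢
  constructor
  · rintro ⟨hi, hnot⟩
    by_contra hi'
    exact hnot ⟨by omega, by rwa [show n + 1 - (n + 1 - i) = i by omega]⟩
  · intro hi
    refine ⟨hiA hi, fun h => h.2 ?_⟩
    rwa [show n + 1 - (n + 1 - i) = i by omega]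

theorem mem_kInv_sdiff_kInv {m : ℕ} :
    m ∈ KInv n A \ KInv n B ↔ m ∈ Icc 1 n ∧ n + 1 - m ∈ B \ A := by
  simp only [KInv, mem_sdiff, mem_filter]
  tauto

theorem ChordSep.kInv (h : ChordSep A B) : ChordSep (KInv n A) (KInv n B) := by
  rintro ⟨i, j, k, l, hij, hjk, hkl, hor⟩
  simp only [mem_kInv_sdiff_kInv, mem_Icc] at hor
  refine h ⟨n + 1 - l, n + 1 - k, n + 1 - j, n + 1 - i, ?_⟩
  rcases hor with ⟨hi, hk, hj, hl⟩ | ⟨hi, hk, hj, hl⟩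
  · exact ⟨by omega, by omega, by omega, .inl ⟨hl.2, hj.2, hk.2, hi.2⟩⟩
  · exact ⟨by omega, by omega, by omega, .inr ⟨hl.2, hj.2, hk.2, hi.2⟩⟩

theorem ChordSep.kInv_left_of_kInv_right (hB : B ⊆ Icc 1 n) (h : ChordSep A (KInv n B)) :
    ChordSep (KInv n A) B :=
  kInv_kInv hB ▸ h.kInv

end KInv

theorem SymmCColl.insert_insert_kInv {n : ℕ} {C : Finset (Finset ℕ)} {A : Finset ℕ}
    (hC : SymmCColl n C) (hA : A ⊆ Icc 1 n) (hsep : ∀ B ∈ C, ChordSep A B)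
    (hself : ChordSep A (KInv n A)) :
    SymmCColl n (insert A (insert (KInv n A) C)) := by
  obtain ⟨hCsub, hCsymm, hCsep⟩ := hC
  have hsep' : ∀ B ∈ C, ChordSep (KInv n A) B := fun B hB =>
    (hsep _ (hCsymm B hB)).kInv_left_of_kInv_right (hCsub B hB)
  simp only [SymmCColl, forall_mem_insert]
  refine ⟨⟨hA, kInv_subset_Icc, hCsub⟩, ⟨?_, ?_, ?_⟩, ?_, ?_, ?_⟩
  · simp
  · simp [kInv_kInv hA]
  · exact fun B hB => by simp [hCsymm B hB]
  · exact ⟨chordSep_refl A, hself, hsep⟩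
  · exact ⟨hself.symm, chordSep_refl _, hsep'⟩
  · exact fun B hB => ⟨(hsep B hB).symm, (hsep' B hB).symm, hCsep B hB⟩

theorem mem_of_chordSep_maximal_general
    (n : ℕ)
    (C : Finset (Finset ℕ)) (hC : SymmCColl n C)
    (hmax : ∀ T : Finset (Finset ℕ), SymmCColl n T → C ⊆ T → T = C)
    (A : Finset ℕ) (hA : A ⊆ Finset.Icc 1 n)
    (hsep : ∀ B ∈ C, ChordSep A B) (hself : ChordSep A (KInv n A)) :
    A ∈ C ∧ KInv n A ∈ C := by
  have hT := hmax _ (hC.insert_insert_kInv hA hsep hself)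
    ((subset_insert _ C).trans (subset_insert _ _))
  rw [← hT]
  simp

/-- If `C` is an inclusion-wise maximal symmetric chord separated collection
and `A ⊆ [n]` is chord separated from every member of `C` and from `A*`,
then `A ∈ C` and `A* ∈ C`. -/
theorem mem_of_chordSep_maximal
    (n : ℕ) (hn : 0 < n)
    (C : Finset (Finset ℕ)) (hC : SymmCColl n C)
    (hmax : ∀ T : Finset (Finset ℕ), SymmCColl n T → C ⊆ T → T = C)
    (A : Finset ℕ) (hA : A ⊆ Finset.Icc 1 n)
    (hsep : ∀ B ∈ C, ChordSep A B) (hself : ChordSep A (KInv n A)) :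
    A ∈ C ∧ KInv n A ∈ C :=
  mem_of_chordSep_maximal_general n C hC hmax A hA hsep hself
end

section
/- Let n be an even positive integer and let k be an integer with 0 ≤ k < n/2. (i) If A ⊆ [n] satisfies |A| > n/2 + k and A is not an interval, then there exists an interval I ⊆ [n] with |I| ≥ n/2 + k such that A and I are not weakly separated. (ii) If B ⊆ [n] satisfies |B| < n/2 − k and B is not a co-interval, then there exists a co-interval J ⊆ [n] with |J| ≤ n/2 − k such that B and J are not weakly separated. -/
/-!
A set `A ⊆ [n]` that is not an interval misses some `z` strictly between `min A` and `max A`,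
so `max A - min A - 1 ≥ |A| - 1`. Hence a run of `|A| - 1` consecutive integers containing `z`
fits strictly between `min A` and `max A`: `A` surrounds it and is larger, so the two are not
weakly separated. Part (ii) is part (i) for the complement `[n] − B`, because
`J − B = ([n] − B) − I` and `B − J = I − ([n] − B)` for `J = [n] − I`.
-/

open Finset

/-- `I` is an interval in `[n]`: a (possibly empty) set of consecutive
integers contained in `{1,…,n}`. -/
def IsIntervalIn (n : ℕ) (I : Finset ℕ) : Prop :=
  I ⊆ Finset.Icc 1 n ∧ ∀ x ∈ I, ∀ y ∈ I, ∀ z : ℕ, x ≤ z → z ≤ y → z ∈ I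

/-- `J` is a co-interval in `[n]`: the complement in `[n]` of an interval. -/
def IsCoIntervalIn (n : ℕ) (J : Finset ℕ) : Prop :=
  ∃ I : Finset ℕ, IsIntervalIn n I ∧ J = Finset.Icc 1 n \ I

lemma surrounds_of_lt {A B : Finset ℕ} {a b : ℕ} (hne : (B \ A).Nonempty)
    (ha : a ∈ A \ B) (hb : b ∈ A \ B) (hbetween : ∀ y ∈ B \ A, a < y ∧ y < b) :
    Surrounds A B := by
  refine ⟨hne, ?_, ?_⟩
  · calc (A \ B).min ≤ a := min_le ha
      _ < (B \ A).min := by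
        obtain ⟨c, hc⟩ := min_of_nonempty hne
        rw [hc]
        exact WithTop.coe_lt_coe.mpr (hbetween c (mem_of_min hc)).1
  · calc (B \ A).max < b := by
          obtain ⟨c, hc⟩ := max_of_nonempty hne
          rw [hc]
          exact WithBot.coe_lt_coe.mpr (hbetween c (mem_of_max hc)).2
      _ ≤ (A \ B).max := le_max hb

lemma not_weakSep_of_surrounds {A B : Finset ℕ} (h : Surrounds A B) (hcard : B.card < A.card) :
    ¬ WeakSep A B :=
  fun hw => (hw.2.1 h).not_gt hcard

lemma not_weakSep_of_surrounded {A B : Finset ℕ} (h : Surrounds B A) (hcard : A.card < B.card) :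
    ¬ WeakSep A B :=
  fun hw => (hw.2.2 h).not_gt hcard

lemma surrounds_sdiff_iff {U B I : Finset ℕ} (hB : B ⊆ U) (hI : I ⊆ U) :
    Surrounds (U \ I) B ↔ Surrounds (U \ B) I := by
  have hout : (U \ I) \ B = (U \ B) \ I := sdiff_right_comm U I B
  have hin : B \ (U \ I) = I \ (U \ B) := by
    ext x
    have := @hB x
    have := @hI x
    simp only [mem_sdiff]
    tauto
  unfold Surrounds
  rw [hout, hin]

lemma isIntervalIn_Ico {n s t : ℕ} (hs : 1 ≤ s) (ht : t ≤ n + 1) : IsIntervalIn n (Ico s t) := by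
  refine ⟨fun x hx => ?_, fun x hx y hy z hxz hzy => ?_⟩
  · simp only [mem_Ico, mem_Icc] at hx ⊢
    omega
  · simp only [mem_Ico] at hx hy ⊢
    omega

lemma exists_gap_of_not_isIntervalIn {n : ℕ} {A : Finset ℕ} (hA : A ⊆ Icc 1 n)
    (hnot : ¬ IsIntervalIn n A) : ∃ x ∈ A, ∃ y ∈ A, ∃ z ∉ A, x < z ∧ z < y := by
  by_contra! h
  refine hnot ⟨hA, fun x hx y hy z hxz hzy => ?_⟩
  by_contra hz
  rcases hxz.lt_or_eq with hxz | rfl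
  · rcases hzy.lt_or_eq with hzy | rfl
    · exact (h x hx y hy z hz hxz).not_gt hzy
    · exact hz hy
  · exact hz hx

lemma exists_isIntervalIn_surrounded {n : ℕ} {A : Finset ℕ} (hA : A ⊆ Icc 1 n)
    (hnot : ¬ IsIntervalIn n A) :
    ∃ I, IsIntervalIn n I ∧ I.card + 1 = A.card ∧ Surrounds A I := by
  obtain ⟨x, hx, y, hy, z, hz, hxz, hzy⟩ := exists_gap_of_not_isIntervalIn hA hnot
  obtain ⟨a, haA, ha⟩ : ∃ a ∈ A, ∀ w ∈ A, a ≤ w :=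
    ⟨A.min' ⟨x, hx⟩, A.min'_mem _, fun w hw => min'_le A w hw⟩
  obtain ⟨b, hbA, hb⟩ : ∃ b ∈ A, ∀ w ∈ A, w ≤ b :=
    ⟨A.max' ⟨x, hx⟩, A.max'_mem _, fun w hw => le_max' A w hw⟩
  have hax := ha x hx
  have hyb := hb y hy
  have hbn := mem_Icc.mp (hA hbA)
  have hcard : A.card + 1 ≤ b + 1 - a := by
    have hsub : insert z A ⊆ Icc a b := by
      intro w hw
      rcases mem_insert.mp hw with rfl | hw
      · exact mem_Icc.mpr ⟨by omega, by omega⟩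
      · exact mem_Icc.mpr ⟨ha w hw, hb w hw⟩
    simpa [card_insert_of_notMem hz, Nat.card_Icc] using card_le_card hsub
  have htwo : 1 < A.card := one_lt_card.mpr ⟨x, hx, y, hy, by omega⟩
  obtain ⟨L, hL⟩ : ∃ L, L + 1 = A.card := ⟨A.card - 1, by omega⟩
  obtain ⟨s, hs⟩ : ∃ s, a < s ∧ s ≤ z ∧ z < s + L ∧ s + L ≤ b := by
    refine ⟨min z (b - L), ?_⟩
    omega
  refine ⟨Ico s (s + L), isIntervalIn_Ico (by omega) (by omega), by simpa using hL, ?_⟩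
  refine surrounds_of_lt ⟨z, mem_sdiff.mpr ⟨mem_Ico.mpr ⟨hs.2.1, hs.2.2.1⟩, hz⟩⟩
    (mem_sdiff.mpr ⟨haA, by simp only [mem_Ico]; omega⟩)
    (mem_sdiff.mpr ⟨hbA, by simp only [mem_Ico]; omega⟩) fun w hw => ?_
  have := mem_Ico.mp (mem_sdiff.mp hw).1
  omega

lemma not_isIntervalIn_sdiff {n : ℕ} {B : Finset ℕ} (hB : B ⊆ Icc 1 n)
    (hnot : ¬ IsCoIntervalIn n B) : ¬ IsIntervalIn n (Icc 1 n \ B) :=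
  fun h => hnot ⟨_, h, (Finset.sdiff_sdiff_eq_self hB).symm⟩

theorem not_weakSep_interval_coInterval_general (n k : ℕ) :
    (∀ A : Finset ℕ, A ⊆ Finset.Icc 1 n → n / 2 + k < A.card →
      ¬ IsIntervalIn n A →
      ∃ I : Finset ℕ, IsIntervalIn n I ∧ n / 2 + k ≤ I.card ∧ ¬ WeakSep A I) ∧
    (∀ B : Finset ℕ, B ⊆ Finset.Icc 1 n → B.card < n / 2 - k →
      ¬ IsCoIntervalIn n B →
      ∃ J : Finset ℕ, IsCoIntervalIn n J ∧ J.card ≤ n / 2 - k ∧ ¬ WeakSep B J) := by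
  refine ⟨fun A hA hcard hnot => ?_, fun B hB hcard hnot => ?_⟩
  · obtain ⟨I, hI, hIcard, hS⟩ := exists_isIntervalIn_surrounded hA hnot
    exact ⟨I, hI, by omega, not_weakSep_of_surrounds hS (by omega)⟩
  · obtain ⟨I, hI, hIcard, hS⟩ :=
      exists_isIntervalIn_surrounded sdiff_subset (not_isIntervalIn_sdiff hB hnot)
    have hJS : Surrounds (Icc 1 n \ I) B := (surrounds_sdiff_iff hB hI.1).mpr hS
    have hBle : B.card ≤ n := by simpa using card_le_card hB
    have hIle : I.card ≤ n := by simpa using card_le_card hI.1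
    rw [card_sdiff_of_subset hB, Nat.card_Icc] at hIcard
    have hJcard : (Icc 1 n \ I).card = n - I.card := by
      rw [card_sdiff_of_subset hI.1, Nat.card_Icc, Nat.add_sub_cancel]
    exact ⟨Icc 1 n \ I, ⟨I, hI, rfl⟩, by omega, not_weakSep_of_surrounded hJS (by omega)⟩

/-- For even `n` and `0 ≤ k < n/2`: (i) any `A ⊆ [n]` with `|A| > n/2 + k`
which is not an interval fails to be weakly separated from some interval `I`
with `|I| ≥ n/2 + k`; (ii) any `B ⊆ [n]` with `|B| < n/2 − k` which is not a
co-interval fails to be weakly separated from some co-interval `J` with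
`|J| ≤ n/2 − k`. -/
theorem not_weakSep_interval_coInterval
    (n k : ℕ) (hn : 0 < n) (hev : Even n) (hk : k < n / 2) :
    (∀ A : Finset ℕ, A ⊆ Finset.Icc 1 n → n / 2 + k < A.card →
      ¬ IsIntervalIn n A →
      ∃ I : Finset ℕ, IsIntervalIn n I ∧ n / 2 + k ≤ I.card ∧ ¬ WeakSep A I) ∧
    (∀ B : Finset ℕ, B ⊆ Finset.Icc 1 n → B.card < n / 2 - k →
      ¬ IsCoIntervalIn n B →
      ∃ J : Finset ℕ, IsCoIntervalIn n J ∧ J.card ≤ n / 2 - k ∧ ¬ WeakSep B J) :=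
  not_weakSep_interval_coInterval_general n k
end
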